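/- Let P : E^m → F be a symmetric (n,…,n)-homogeneous polynomial (n repeated m times). If for all x₀, x₁, …, x_m ∈ E the entire polarization formula holds, namely P(x₁,…,x_m) = (1/((mn)!·2^{mn})) Σ_{ε∈{±1}^{mn}} ε₁⋯ε_{mn} · P(x₀ + Σ_{k=1}^{n} ε_k x₁ + ⋯ + Σ_{k=1}^{n} ε_{(m−1)n+k} x_m)^m, then there exists a symmetric mn-linear map A : E^{mn} → F with P(x₁,…,x_m) = A(x₁,…,x₁, …, x_m,…,x_m) (each x_i repeated n times). -/

import Mathlib

open scoped BigOperators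

/-- `P : E → F` is an `m`-homogeneous polynomial if there is an `m`-linear map
`A : E^m → F` with `P x = A (x, …, x)` for all `x`. -/
def IsHomogPoly (𝕂 : Type*) [RCLike 𝕂] {E F : Type*} [AddCommGroup E] [Module 𝕂 E]
    [AddCommGroup F] [Module 𝕂 F] (m : ℕ) (P : E → F) : Prop :=
  ∃ A : MultilinearMap 𝕂 (fun _ : Fin m => E) F, ∀ x, P x = A fun _ => x

/-- `P : E^m → F` is an `(n 0, …, n (m-1))`-homogeneous polynomial (multipolynomial) if,
for each `j`, the map `x ↦ P (x₁, …, x_{j-1}, x, x_{j+1}, …, x_m)` is an `n j`-homogeneous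
polynomial when the remaining variables are kept fixed. -/
def IsMultiPoly (𝕂 : Type*) [RCLike 𝕂] {E F : Type*} [AddCommGroup E] [Module 𝕂 E]
    [AddCommGroup F] [Module 𝕂 F] {m : ℕ} (n : Fin m → ℕ) (P : (Fin m → E) → F) : Prop :=
  ∀ (j : Fin m) (x : Fin m → E), IsHomogPoly 𝕂 (n j) fun y => P (Function.update x j y)

/-- `P : E^m → F` is symmetric if it is invariant under permutations of its arguments. -/
def IsSymm' {E F : Type*} {m : ℕ} (P : (Fin m → E) → F) : Prop :=
  ∀ (σ : Equiv.Perm (Fin m)) (x : Fin m → E), P (x ∘ σ) = P x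

/-- The sign `ε_t ∈ {±1}` at position `t ∈ {0, …, N-1}` (as an integer; `0` out of range). -/
def signAt {N : ℕ} (ε : Fin N → ℤˣ) (t : ℕ) : ℤ :=
  if h : t < N then (ε ⟨t, h⟩ : ℤ) else 0

/-!
Let `Φ(v) = ∑_ε (∏ ε) P(∑_t ε_{1t} v_{1t}, …, ∑_t ε_{mt} v_{mt})`, the sum running over all
`m × n` sign matrices `ε`. Grouping the `ε` by their rows other than the `i`-th exhibits `Φ` as a
combination of polarizations of the `n`-homogeneous polynomials `P(…, ·, …)` in the `i`-th slot,
and the polarization of `A(w, …, w)` is `2ⁿ` times the symmetrization of `A`; hence `Φ` is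
`mn`-linear. On the diagonal, homogeneity in each slot gives `Φ = (2ⁿ n!)ᵐ P`, so
`w ↦ P(w, …, w)` is the diagonal of an `mn`-linear map `B`. The assumed polarization formula only
involves `P` on the diagonal, so it identifies `P(x₁, …, x_m)` with the symmetrization of `B` at
`(x₁, …, x₁, …, x_m, …, x_m)`.
-/

open Finset

def polarization {E F : Type*} [AddCommGroup E] [AddCommGroup F] {n : ℕ} (q : E → F)
    (y : Fin n → E) : F :=
  ∑ δ : Fin n → ℤˣ, (∏ t, (δ t : ℤ)) • q (∑ t, (δ t : ℤ) • y t)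

section SignSums

variable {ι : Type*} [Fintype ι] [DecidableEq ι]

theorem sum_units_prod_mul_prod_perm (σ : Equiv.Perm ι) :
    ∑ ε : ι → ℤˣ, (∏ k, (ε k : ℤ)) * ∏ j, (ε (σ j) : ℤ) = 2 ^ Fintype.card ι := by
  have h (ε : ι → ℤˣ) : (∏ k, (ε k : ℤ)) * ∏ j, (ε (σ j) : ℤ) = 1 := by
    rw [Equiv.prod_comp σ fun k => (ε k : ℤ), ← prod_mul_distrib]
    exact prod_eq_one fun k _ => Int.isUnit_mul_self (ε k).isUnit
  simp [h, Fintype.card_units_int]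

/-- `ε ↦ ∏ ε_k ∏ ε_{f j}` is a character of `(ℤˣ)^ι`, nontrivial because `ε_{k₀}` occurs once. -/
theorem sum_units_prod_mul_prod_comp_eq_zero {f : ι → ι} (hf : ¬ f.Surjective) :
    ∑ ε : ι → ℤˣ, (∏ k, (ε k : ℤ)) * ∏ j, (ε (f j) : ℤ) = 0 := by
  obtain ⟨k₀, hk₀⟩ := not_forall.1 hf
  push Not at hk₀
  let χ : (ι → ℤˣ) →* ℤ := (Units.coeHom ℤ).comp
    ((∏ k, Pi.evalMonoidHom _ k) * ∏ j, Pi.evalMonoidHom _ (f j))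
  have hχ : χ (Pi.mulSingle k₀ (-1)) = -1 := by
    simp [χ, Pi.mulSingle_apply, hk₀, eq_comm]
  simpa [χ] using sum_hom_units_eq_zero χ fun h => by simp [h] at hχ

end SignSums

theorem MultilinearMap.polarization_eq_sum_perm {E F : Type*} [AddCommGroup E] [AddCommGroup F]
    {N : ℕ} (B : MultilinearMap ℤ (fun _ : Fin N => E) F) (z : Fin N → E) :
    polarization (fun w => B fun _ => w) z = 2 ^ N • ∑ σ : Equiv.Perm (Fin N), B (z ∘ σ) := by
  have expand (ε : Fin N → ℤˣ) : B (fun _ => ∑ k, (ε k : ℤ) • z k) =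
      ∑ f : Fin N → Fin N, (∏ j, (ε (f j) : ℤ)) • B (z ∘ f) := by
    rw [B.map_sum]
    exact sum_congr rfl fun f _ => B.map_smul_univ _ _
  simp_rw [polarization, expand, smul_sum, smul_smul]
  rw [sum_comm]
  simp_rw [← sum_smul]
  refine (Fintype.sum_of_injective (fun σ : Equiv.Perm (Fin N) => ⇑σ) DFunLike.coe_injective
    _ _ (fun f hf => ?_) fun σ => ?_).symm
  · have : ¬ f.Surjective := fun hs =>
      hf ⟨Equiv.ofBijective f ⟨Finite.injective_iff_surjective.2 hs, hs⟩, rfl⟩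
    rw [sum_units_prod_mul_prod_comp_eq_zero this, zero_smul]
  · rw [sum_units_prod_mul_prod_perm, Fintype.card_fin]
    norm_cast

theorem sum_units_prod_mul_sum_pow (n : ℕ) :
    ∑ δ : Fin n → ℤˣ, (∏ t, (δ t : ℤ)) * (∑ t, (δ t : ℤ)) ^ n = 2 ^ n * n.factorial := by
  simpa [polarization, MultilinearMap.mkPiAlgebra_apply, Fintype.card_perm] using
    (MultilinearMap.mkPiAlgebra ℤ (Fin n) ℤ).polarization_eq_sum_perm fun _ => 1

namespace MultilinearMap

variable {𝕂 : Type*} [Field 𝕂] {E F : Type*} [AddCommGroup E] [Module 𝕂 E]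
  [AddCommGroup F] [Module 𝕂 F] {ι : Type*} [Fintype ι] [DecidableEq ι]

def symmetrize (B : MultilinearMap 𝕂 (fun _ : ι => E) F) : MultilinearMap 𝕂 (fun _ : ι => E) F :=
  ((Fintype.card ι).factorial : 𝕂)⁻¹ • ∑ σ : Equiv.Perm ι, B.domDomCongr σ

theorem symmetrize_apply (B : MultilinearMap 𝕂 (fun _ : ι => E) F) (z : ι → E) :
    B.symmetrize z = ((Fintype.card ι).factorial : 𝕂)⁻¹ • ∑ σ : Equiv.Perm ι, B (z ∘ σ) := by
  simp only [symmetrize, smul_apply, _root_.sum_apply, domDomCongr_apply]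
  rfl

theorem symmetrize_apply_comp_perm (B : MultilinearMap 𝕂 (fun _ : ι => E) F) (τ : Equiv.Perm ι)
    (z : ι → E) : B.symmetrize (z ∘ τ) = B.symmetrize z := by
  simp only [symmetrize_apply]
  congr 1
  exact Equiv.sum_comp (Equiv.mulLeft τ) fun σ => B (z ∘ σ)

theorem symmetrize_apply_eq_polarization [CharZero 𝕂] {N : ℕ}
    (B : MultilinearMap 𝕂 (fun _ : Fin N => E) F) (z : Fin N → E) :
    B.symmetrize z =
      ((N.factorial * 2 ^ N : ℕ) : 𝕂)⁻¹ • polarization (fun w => B fun _ => w) z := by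
  rw [← coe_restrictScalars ℤ B, (B.restrictScalars ℤ).polarization_eq_sum_perm z,
    coe_restrictScalars, symmetrize_apply, ← Nat.cast_smul_eq_nsmul 𝕂, smul_smul,
    Fintype.card_fin, Nat.cast_mul, mul_inv, mul_assoc, inv_mul_cancel₀ (by simp), mul_one]

end MultilinearMap

theorem Fintype.sum_eq_sum_filter_sum_update {ι β M : Type*} [Fintype ι] [DecidableEq ι]
    [Fintype β] [DecidableEq β] [AddCommMonoid M] (i : ι) (b : β) (g : (ι → β) → M) :
    ∑ ε, g ε = ∑ ε with ε i = b, ∑ δ, g (Function.update ε i δ) := by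
  rw [← sum_product']
  refine (sum_nbij' (fun p => Function.update p.1 i p.2) (fun ε => (Function.update ε i b, ε i))
    (by simp) (by simp) (fun p hp => ?_) (by simp) (by simp)).symm
  simp only [mem_product, mem_filter] at hp
  simp [← hp.1.2]

section HomogeneousPolynomial

variable {𝕂 : Type*} [RCLike 𝕂] {E F : Type*} [AddCommGroup E] [Module 𝕂 E]
  [AddCommGroup F] [Module 𝕂 F]

theorem IsHomogPoly.map_smul {m : ℕ} {q : E → F} (hq : IsHomogPoly 𝕂 m q) (c : 𝕂) (x : E) :
    q (c • x) = c ^ m • q x := by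
  obtain ⟨A, hA⟩ := hq
  rw [hA, hA]
  simpa using A.map_smul_univ (fun _ => c) fun _ => x

theorem IsHomogPoly.exists_multilinearMap_polarization {n : ℕ} {q : E → F}
    (hq : IsHomogPoly 𝕂 n q) :
    ∃ M : MultilinearMap 𝕂 (fun _ : Fin n => E) F, ∀ y, polarization q y = M y := by
  obtain ⟨A, hA⟩ := hq
  refine ⟨((n.factorial * 2 ^ n : ℕ) : 𝕂) • A.symmetrize, fun y => ?_⟩
  rw [smul_apply, A.symmetrize_apply_eq_polarization,
    smul_inv_smul₀ (by simp [Nat.factorial_ne_zero]), ← funext hA]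

theorem IsMultiPoly.map_smul {m : ℕ} {n : Fin m → ℕ} {P : (Fin m → E) → F}
    (hP : IsMultiPoly 𝕂 n P) (c : Fin m → 𝕂) (x : Fin m → E) :
    P (fun i => c i • x i) = (∏ i, c i ^ n i) • P x := by
  suffices h : ∀ S : Finset (Fin m),
      P (S.piecewise (fun i => c i • x i) x) = (∏ i ∈ S, c i ^ n i) • P x by
    simpa using h univ
  intro S
  induction S using Finset.induction_on with
  | empty => simp
  | @insert j S hj ih =>
    have hY : S.piecewise (fun i => c i • x i) x j = x j := S.piecewise_eq_of_notMem _ _ hj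
    have := (hP j (S.piecewise (fun i => c i • x i) x)).map_smul (c j) (x j)
    rw [← hY, Function.update_eq_self] at this
    rw [piecewise_insert, ← hY, this, ih, prod_insert hj, mul_smul]

end HomogeneousPolynomial

section BlockPolarization

variable {𝕂 : Type*} [RCLike 𝕂] {E F : Type*} [AddCommGroup E] [Module 𝕂 E]
  [AddCommGroup F] [Module 𝕂 F] {m n : ℕ}

def blockPolarization (P : (Fin m → E) → F) (v : Fin m → Fin n → E) : F :=
  ∑ ε : Fin m → Fin n → ℤˣ, (∏ i, ∏ t, (ε i t : ℤ)) • P (fun i => ∑ t, (ε i t : ℤ) • v i t)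

open Function in
theorem blockPolarization_update_eq_sum (P : (Fin m → E) → F) (u : Fin m → Fin n → E)
    (i₀ : Fin m) (y : Fin n → E) :
    blockPolarization P (update u i₀ y) =
      ∑ ε : Fin m → Fin n → ℤˣ with ε i₀ = 1, (∏ i ∈ univ \ {i₀}, ∏ t, (ε i t : ℤ)) •
        polarization (fun w => P (update (fun i => ∑ t, (ε i t : ℤ) • u i t) i₀ w)) y := by
  rw [blockPolarization, Fintype.sum_eq_sum_filter_sum_update i₀ 1]
  refine sum_congr rfl fun ε _ => ?_
  rw [polarization, smul_sum]
  refine sum_congr rfl fun δ _ => ?_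
  have hcoef : ∏ i, ∏ t, (update ε i₀ δ i t : ℤ) =
      (∏ t, (δ t : ℤ)) * ∏ i ∈ univ \ {i₀}, ∏ t, (ε i t : ℤ) := by
    simp_rw [apply_update (fun _ (d : Fin n → ℤˣ) => ∏ t, (d t : ℤ)) ε i₀ δ]
    exact prod_update_of_mem (mem_univ i₀) _ _
  have harg : (fun i => ∑ t, (update ε i₀ δ i t : ℤ) • update u i₀ y i t) =
      update (fun i => ∑ t, (ε i t : ℤ) • u i t) i₀ (∑ t, (δ t : ℤ) • y t) :=
    funext (apply_update₂ (fun _ (d : Fin n → ℤˣ) (v : Fin n → E) => ∑ t, (d t : ℤ) • v t)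
      ε u i₀ δ y)
  rw [hcoef, harg, mul_comm, mul_smul]

theorem IsMultiPoly.exists_multilinearMap_blockPolarization_update {P : (Fin m → E) → F}
    (hP : IsMultiPoly 𝕂 (fun _ => n) P) (u : Fin m → Fin n → E) (i₀ : Fin m) :
    ∃ M : MultilinearMap 𝕂 (fun _ : Fin n => E) F,
      ∀ y, blockPolarization P (Function.update u i₀ y) = M y := by
  choose M hM using fun ε : Fin m → Fin n → ℤˣ =>
    (hP i₀ fun i => ∑ t, (ε i t : ℤ) • u i t).exists_multilinearMap_polarization
  refine ⟨∑ ε : Fin m → Fin n → ℤˣ with ε i₀ = 1,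
    (∏ i ∈ univ \ {i₀}, ∏ t, (ε i t : ℤ)) • M ε, fun y => ?_⟩
  simp only [blockPolarization_update_eq_sum, hM, _root_.sum_apply, smul_apply]

theorem IsMultiPoly.exists_multilinearMap_eq_blockPolarization {P : (Fin m → E) → F}
    (hP : IsMultiPoly 𝕂 (fun _ => n) P) :
    ∃ B : MultilinearMap 𝕂 (fun _ : Fin m × Fin n => E) F,
      ∀ v, B v = blockPolarization P (Function.curry v) := by
  refine ⟨{ toFun := fun v => blockPolarization P (Function.curry v)
            map_update_add' := fun {inst} v p a b => ?_
            map_update_smul' := fun {inst} v p c a => ?_ }, fun _ => rfl⟩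
  all_goals
    obtain rfl : inst = instDecidableEqProd := Subsingleton.elim _ _
    obtain ⟨M, hM⟩ := hP.exists_multilinearMap_blockPolarization_update (Function.curry v) p.1
    simp only [Function.curry_update, hM]
  · exact M.map_update_add _ _ _ _
  · exact M.map_update_smul _ _ _ _

theorem IsMultiPoly.blockPolarization_diag {P : (Fin m → E) → F}
    (hP : IsMultiPoly 𝕂 (fun _ => n) P) (x : Fin m → E) :
    blockPolarization P (fun i (_ : Fin n) => x i) =
      (((2 ^ n * n.factorial) ^ m : ℕ) : 𝕂) • P x := by
  have hterm (ε : Fin m → Fin n → ℤˣ) :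
      (∏ i, ∏ t, (ε i t : ℤ)) • P (fun i => ∑ t, (ε i t : ℤ) • x i) =
        ((∏ i, (∏ t, (ε i t : ℤ)) * (∑ t, (ε i t : ℤ)) ^ n : ℤ) : 𝕂) • P x := by
    have hsum (i : Fin m) : ∑ t, (ε i t : ℤ) • x i = ((∑ t, (ε i t : ℤ) : ℤ) : 𝕂) • x i := by
      rw [← sum_smul, Int.cast_smul_eq_zsmul]
    rw [funext hsum, hP.map_smul, ← Int.cast_smul_eq_zsmul 𝕂, smul_smul, prod_mul_distrib]
    push_cast
    rfl
  rw [blockPolarization, sum_congr rfl fun ε _ => hterm ε, ← sum_smul, ← Int.cast_sum,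
    ← Fintype.prod_sum fun _ (δ : Fin n → ℤˣ) => (∏ t, (δ t : ℤ)) * (∑ t, (δ t : ℤ)) ^ n,
    sum_units_prod_mul_sum_pow, prod_const, card_univ, Fintype.card_fin]
  push_cast
  rfl

theorem IsMultiPoly.isHomogPoly_diagonal {P : (Fin m → E) → F}
    (hP : IsMultiPoly 𝕂 (fun _ => n) P) :
    IsHomogPoly 𝕂 (m * n) fun w => P fun _ => w := by
  obtain ⟨B, hB⟩ := hP.exists_multilinearMap_eq_blockPolarization
  refine ⟨(((2 ^ n * n.factorial) ^ m : ℕ) : 𝕂)⁻¹ • B.domDomCongr finProdFinEquiv, fun w => ?_⟩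
  rw [smul_apply, MultilinearMap.domDomCongr_apply, hB]
  exact ((inv_smul_eq_iff₀ (by simp [Nat.factorial_ne_zero])).2
    (hP.blockPolarization_diag fun _ => w)).symm

end BlockPolarization

theorem sum_sum_range_signAt_smul {E : Type*} [AddCommGroup E] {m n : ℕ}
    (ε : Fin (m * n) → ℤˣ) (x : Fin m → E) :
    ∑ i : Fin m, ∑ t ∈ range n, signAt ε (i * n + t) • x i =
      ∑ k : Fin (m * n), (ε k : ℤ) • x k.divNat := by
  rw [← finProdFinEquiv.sum_comp, Fintype.sum_prod_type]
  refine sum_congr rfl fun i _ => ?_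
  rw [sum_range]
  refine sum_congr rfl fun t _ => ?_
  have hk : ((finProdFinEquiv (i, t) : Fin (m * n)) : ℕ) = i * n + t := by
    rw [finProdFinEquiv_apply_val]; ring
  have hdiv : (finProdFinEquiv (i, t)).divNat = i := by
    simpa only [finProdFinEquiv_symm_apply] using
      congrArg Prod.fst (finProdFinEquiv.symm_apply_apply (i, t))
  rw [signAt, dif_pos (hk ▸ (finProdFinEquiv (i, t)).isLt), hdiv]
  simp_rw [← hk]

theorem mem_psi_of_entire_polarization_general {𝕂 : Type*} [RCLike 𝕂] {E F : Type*}
    [AddCommGroup E] [Module 𝕂 E] [AddCommGroup F] [Module 𝕂 F]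
    {m n : ℕ} (P : (Fin m → E) → F)
    (hP : IsMultiPoly 𝕂 (fun _ : Fin m => n) P)
    (hpol : ∀ (x₀ : E) (x : Fin m → E),
      P x =
        (((m * n).factorial * 2 ^ (m * n) : ℕ) : 𝕂)⁻¹ •
          ∑ ε : Fin (m * n) → ℤˣ,
            (∏ k : Fin (m * n), (ε k : ℤ)) •
              P (fun _ => x₀ + ∑ i : Fin m, ∑ t ∈ Finset.range n,
                signAt ε ((i : ℕ) * n + t) • x i)) :
    ∃ A : MultilinearMap 𝕂 (fun _ : Fin (m * n) => E) F,
      (∀ (σ : Equiv.Perm (Fin (m * n))) (z : Fin (m * n) → E), A (z ∘ σ) = A z) ∧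
      (∀ x : Fin m → E, P x = A fun k => x k.divNat) := by
  obtain ⟨B, hB⟩ := hP.isHomogPoly_diagonal
  refine ⟨B.symmetrize, B.symmetrize_apply_comp_perm, fun x => ?_⟩
  rw [hpol 0 x, B.symmetrize_apply_eq_polarization, polarization]
  simp_rw [zero_add, sum_sum_range_signAt_smul, hB]

/-- If a symmetric `(n, …, n)`-homogeneous polynomial `P : E^m → F` satisfies the entire
polarization formula
`P (x₁, …, x_m) = (1/((mn)! 2^{mn})) ∑_ε ε₁ ⋯ ε_{mn}
P (x₀ + ∑_{k=1}^n ε_k x₁ + ⋯ + ∑_{k=1}^n ε_{(m-1)n+k} x_m)^m` for all `x₀, x₁, …, x_m ∈ E`,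
then there is a symmetric `mn`-linear map `A : E^{mn} → F` with
`P (x₁, …, x_m) = A (x₁, …, x₁, …, x_m, …, x_m)` (each `x_i` repeated `n` times). -/
theorem mem_psi_of_entire_polarization {𝕂 : Type*} [RCLike 𝕂] {E F : Type*}
    [AddCommGroup E] [Module 𝕂 E] [AddCommGroup F] [Module 𝕂 F]
    {m n : ℕ} (P : (Fin m → E) → F)
    (hsym : IsSymm' P) (hP : IsMultiPoly 𝕂 (fun _ : Fin m => n) P)
    (hpol : ∀ (x₀ : E) (x : Fin m → E),
      P x =
        (((m * n).factorial * 2 ^ (m * n) : ℕ) : 𝕂)⁻¹ •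
          ∑ ε : Fin (m * n) → ℤˣ,
            (∏ k : Fin (m * n), (ε k : ℤ)) •
              P (fun _ => x₀ + ∑ i : Fin m, ∑ t ∈ Finset.range n,
                signAt ε ((i : ℕ) * n + t) • x i)) :
    ∃ A : MultilinearMap 𝕂 (fun _ : Fin (m * n) => E) F,
      (∀ (σ : Equiv.Perm (Fin (m * n))) (z : Fin (m * n) → E), A (z ∘ σ) = A z) ∧
      (∀ x : Fin m → E, P x = A fun k => x k.divNat) :=
  mem_psi_of_entire_polarization_general P hP hpol
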